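/- arXiv:2502.19636 — 4 statements merged into one kernel-verified Lean document; each statement's English description precedes it below -/
import Mathlib

section
/- For any finite exponential sum: if p(x) = ∑_{0<|m|≤N} p_m e^{2πimx}, θ ∈ ℝ irrational, Q ∈ ℕ, φ ∈ ℝ, then |∑_{k=0}^{Q−1} p(kθ + φ)| ≤ (π/2) · (‖Qθ‖ / min_{1≤m≤N} ‖mθ‖) · ∑_{0<|m|≤N} |m·p_m|. -/
open scoped BigOperators

/-- Distance from `x` to the nearest integer. -/
noncomputable def nint (x : ℝ) : ℝ := |x - round x|

/-- Complete quotients `α_n` of `θ`: `α_0 = θ`, `α_{n+1} = 1 / {α_n}`. -/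
noncomputable def cq (θ : ℝ) : ℕ → ℝ
  | 0 => θ
  | n + 1 => 1 / Int.fract (cq θ n)

/-- Partial quotients `a_n` of the continued fraction of `θ`. -/
noncomputable def pq (θ : ℝ) (n : ℕ) : ℤ := ⌊cq θ n⌋

/-- Denominators `Q_n` of the convergents of `θ`: `Q_0 = 1`, `Q_1 = a_1`,
`Q_{n+2} = a_{n+2} Q_{n+1} + Q_n`. -/
noncomputable def qden (θ : ℝ) : ℕ → ℤ
  | 0 => 1
  | 1 => pq θ 1
  | n + 2 => pq θ (n + 2) * qden θ (n + 1) + qden θ n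

/-!
Expanding `p` and exchanging the two sums reduces the bound to a single frequency `m`, where the
sum over `k` is geometric in `z = e^{2πimθ}` and has norm `|z^Q - 1| / |z - 1|`. The numerator is
at most `2π‖mQθ‖ ≤ 2π|m|‖Qθ‖`, the denominator at least `4‖mθ‖`, and `‖mθ‖ = ‖|m|θ‖` is at least
the minimum over `1 ≤ n ≤ N`, which is positive because `θ` is irrational.
-/

open Real Complex

lemma nint_eq_norm (x : ℝ) : nint x = ‖(x : UnitAddCircle)‖ := UnitAddCircle.norm_eq.symm

lemma nint_neg (x : ℝ) : nint (-x) = nint x := by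
  rw [nint_eq_norm, nint_eq_norm, QuotientAddGroup.mk_neg, norm_neg]

lemma nint_intCast_mul_le (m : ℤ) (x : ℝ) : nint (m * x) ≤ |(m : ℝ)| * nint x := by
  rw [nint_eq_norm, nint_eq_norm, ← zsmul_eq_mul, QuotientAddGroup.mk_zsmul]
  simpa [Int.norm_eq_abs] using norm_zsmul_le m (x : UnitAddCircle)

lemma nint_pos_of_irrational {x : ℝ} (hx : Irrational x) : 0 < nint x :=
  abs_pos.mpr (sub_ne_zero.mpr (hx.ne_int (round x)))

lemma exp_two_pi_I_mul_eq_exp_I_mul (t : ℝ) :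
    exp (2 * π * I * t) = exp (I * ↑(2 * π * (t - round t))) := by
  rw [← mul_one (exp (I * _)), ← exp_int_mul_two_pi_mul_I (round t), ← Complex.exp_add]
  push_cast
  ring_nf

lemma norm_exp_two_pi_I_mul_sub_one_le (t : ℝ) :
    ‖exp (2 * π * I * t) - 1‖ ≤ 2 * π * nint t := by
  rw [exp_two_pi_I_mul_eq_exp_I_mul]
  refine norm_exp_I_mul_ofReal_sub_one_le.trans_eq ?_
  rw [Real.norm_eq_abs, abs_mul, abs_of_pos two_pi_pos, nint]

lemma four_mul_nint_le_norm_exp_two_pi_I_mul_sub_one (t : ℝ) :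
    4 * nint t ≤ ‖exp (2 * π * I * t) - 1‖ := by
  have hs : |π * (t - round t)| ≤ π / 2 := by
    rw [abs_mul, abs_of_pos pi_pos]
    nlinarith [abs_sub_round t, pi_pos]
  have jordan := mul_abs_le_abs_sin hs
  rw [abs_mul, abs_of_pos pi_pos, ← mul_assoc, div_mul_cancel₀ _ pi_ne_zero] at jordan
  rw [exp_two_pi_I_mul_eq_exp_I_mul, norm_exp_I_mul_ofReal_sub_one, Real.norm_eq_abs, abs_mul,
    abs_two, nint]
  rw [show 2 * π * (t - round t) / 2 = π * (t - round t) by ring]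
  linarith

lemma norm_sum_range_exp_two_pi_I_le {α : ℝ} (hα : 0 < nint α) (β : ℝ) (Q : ℕ) :
    ‖∑ k ∈ Finset.range Q, exp (2 * π * I * ↑(k * α + β))‖ ≤ π / 2 * (nint (Q * α) / nint α) := by
  set z := exp (2 * π * I * α)
  have hz : 0 < ‖z - 1‖ :=
    lt_of_lt_of_le (by positivity) (four_mul_nint_le_norm_exp_two_pi_I_mul_sub_one α)
  have hzQ : z ^ Q = exp (2 * π * I * ↑(Q * α)) := by
    rw [← Complex.exp_nat_mul]; push_cast; ring_nf
  have hsum : ∑ k ∈ Finset.range Q, exp (2 * π * I * ↑(k * α + β))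
      = exp (2 * π * I * β) * ∑ k ∈ Finset.range Q, z ^ k := by
    rw [Finset.mul_sum]
    refine Finset.sum_congr rfl fun k _ => ?_
    rw [← Complex.exp_nat_mul, ← Complex.exp_add]; push_cast; ring_nf
  have hβ : ‖exp (2 * π * I * β)‖ = 1 := by
    rw [show 2 * π * I * β = ↑(2 * π * β) * I by push_cast; ring]
    exact norm_exp_ofReal_mul_I _
  rw [hsum, norm_mul, hβ, one_mul, geom_sum_eq (sub_ne_zero.mp (norm_pos_iff.mp hz)), norm_div,
    hzQ]
  calc ‖exp (2 * π * I * ↑(Q * α)) - 1‖ / ‖z - 1‖ ≤ 2 * π * nint (Q * α) / (4 * nint α) :=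
        div_le_div₀ (mul_nonneg two_pi_pos.le (abs_nonneg _)) (norm_exp_two_pi_I_mul_sub_one_le _)
          (by positivity) (four_mul_nint_le_norm_exp_two_pi_I_mul_sub_one α)
    _ = π / 2 * (nint (Q * α) / nint α) := by field_simp; ring

lemma norm_sum_range_exp_int_mul_le {θ S : ℝ} (m : ℤ) (hS : 0 < S) (hSm : S ≤ nint (m * θ))
    (φ : ℝ) (Q : ℕ) :
    ‖∑ k ∈ Finset.range Q, exp (2 * π * I * m * ↑(k * θ + φ))‖ ≤
      π / 2 * (nint (Q * θ) / S) * |(m : ℝ)| := by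
  have hphase : ∀ k : ℕ, 2 * π * I * m * ↑(k * θ + φ) = 2 * π * I * ↑(k * (m * θ) + m * φ) := by
    intro k; push_cast; ring
  simp_rw [hphase]
  refine (norm_sum_range_exp_two_pi_I_le (hS.trans_le hSm) _ Q).trans ?_
  have hnum : nint (Q * (m * θ)) ≤ |(m : ℝ)| * nint (Q * θ) := by
    rw [mul_left_comm]; exact nint_intCast_mul_le m _
  calc π / 2 * (nint (Q * (m * θ)) / nint (m * θ)) ≤ π / 2 * (|(m : ℝ)| * nint (Q * θ) / S) := by
        gcongr
        exact (abs_nonneg _).trans hnum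
    _ = π / 2 * (nint (Q * θ) / S) * |(m : ℝ)| := by ring

lemma nint_intCast_mul_mem_image {N : ℕ} {m : ℤ} (hm : m ∈ (Finset.Icc (-(N : ℤ)) N).erase 0)
    (θ : ℝ) : nint (m * θ) ∈ (fun n : ℕ => nint (n * θ)) '' Set.Icc 1 N := by
  obtain ⟨hm0, hmN⟩ := Finset.mem_erase.mp hm
  refine ⟨m.natAbs, ⟨by omega, by rw [Finset.mem_Icc] at hmN; omega⟩, ?_⟩
  rcases Int.natAbs_eq m with h | h <;> rw [h]
  · simp
  · simp [nint_neg]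

lemma sInf_image_nint_natCast_mul_pos {θ : ℝ} (hθ : Irrational θ) {N : ℕ}
    (hne : ((fun n : ℕ => nint (n * θ)) '' Set.Icc 1 N).Nonempty) :
    0 < sInf ((fun n : ℕ => nint (n * θ)) '' Set.Icc 1 N) := by
  obtain ⟨n, ⟨hn, -⟩, hmin⟩ := hne.csInf_mem ((Set.finite_Icc 1 N).image _)
  rw [← hmin]
  exact nint_pos_of_irrational (hθ.natCast_mul (by omega))

open Complex in
/-- general bound for exponential sums of a trigonometric polynomial. -/
theorem stmt5 (θ : ℝ) (hθ : Irrational θ) (N : ℕ) (c : ℤ → ℂ)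
    (p : ℝ → ℂ)
    (hp : ∀ x : ℝ, p x = ∑ m ∈ (Finset.Icc (-(N : ℤ)) (N : ℤ)).erase 0,
      c m * Complex.exp (2 * Real.pi * Complex.I * m * x))
    (Q : ℕ) (φ : ℝ) :
    ‖∑ k ∈ Finset.range Q, p (k * θ + φ)‖ ≤
      Real.pi / 2 *
        (nint (Q * θ) / sInf ((fun m : ℕ => nint (m * θ)) '' Set.Icc 1 N)) *
        (∑ m ∈ (Finset.Icc (-(N : ℤ)) (N : ℤ)).erase 0, |(m : ℝ)| * ‖c m‖) := by
  set S := sInf ((fun m : ℕ => nint (m * θ)) '' Set.Icc 1 N)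
  have hswap : ∑ k ∈ Finset.range Q, p (k * θ + φ) = ∑ m ∈ (Finset.Icc (-(N : ℤ)) N).erase 0,
      c m * ∑ k ∈ Finset.range Q, exp (2 * π * I * m * ↑(k * θ + φ)) := by
    simp_rw [hp, Finset.mul_sum]
    exact Finset.sum_comm
  rw [hswap, Finset.mul_sum]
  refine (norm_sum_le _ _).trans (Finset.sum_le_sum fun m hm => ?_)
  have hmem := nint_intCast_mul_mem_image hm θ
  have hS : 0 < S := sInf_image_nint_natCast_mul_pos hθ ⟨_, hmem⟩
  have hSm : S ≤ nint (m * θ) := csInf_le ((Set.finite_Icc 1 N).image _).bddBelow hmem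
  rw [norm_mul]
  calc ‖c m‖ * ‖∑ k ∈ Finset.range Q, exp (2 * π * I * m * ↑(k * θ + φ))‖
      ≤ ‖c m‖ * (π / 2 * (nint (Q * θ) / S) * |(m : ℝ)|) :=
        mul_le_mul_of_nonneg_left (norm_sum_range_exp_int_mul_le m hS hSm φ Q) (norm_nonneg _)
    _ = π / 2 * (nint (Q * θ) / S) * (|(m : ℝ)| * ‖c m‖) := by ring
end

section
/- Let f be a continuous 1-periodic even function (f(x) = f(−x) for all x) of bounded variation with ∫_0^1 f = 0. Then for every irrational θ, liminf_{Q→∞} |∑_{k=0}^{Q−1} f(kθ)| = 0. -/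
open scoped BigOperators

/-!
Denjoy–Koksma: if `|θ - p/q| ≤ 1/q²` with `p/q` in lowest terms, then modulo 1 the points
`kθ`, `k < q`, are the points `σ(k)/q` (`σ` a permutation of `{0, …, q-1}`) each moved by at
most `1/q`; comparing `f(kθ)` with the mean of `f` over `[σ(k)/q, (σ(k)+1)/q]` gives
`|S_q| ≤ 2 Var f`, where `S_Q = ∑_{k<Q} f(kθ)`. Along such denominators `q_n → ∞`, a
subsequence of the bounded `S_{q_n}` converges to some `L`, while `q_n θ → 0` modulo 1. As `f`
is even, `f((q_n - j)θ) → f(jθ)`, so `S_{q_n - m} → L - S_{m+1} + f(0)`, and for `m = q_k`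
this limit tends to `L - L - f(0) + f(0) = 0`.
-/

open Set Filter Topology MeasureTheory Function

theorem BoundedVariationOn.intervalIntegrable {f : ℝ → ℝ} {a b : ℝ}
    (hf : BoundedVariationOn f (uIcc a b)) : IntervalIntegrable f volume a b := by
  obtain ⟨g, h, hg, hh, rfl⟩ := hf.locallyBoundedVariationOn.exists_monotoneOn_sub_monotoneOn
  exact hg.intervalIntegrable.sub hh.intervalIntegrable

theorem Function.Periodic.eVariationOn_Icc_add {f : ℝ → ℝ} {c : ℝ} (hf : Periodic f c)
    (a b : ℝ) : eVariationOn f (Icc (a + c) (b + c)) = eVariationOn f (Icc a b) := by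
  rw [← image_add_const_Icc, ← eVariationOn.comp_eq_of_monotoneOn f (· + c)
    ((monotone_id.add_const c).monotoneOn _)]
  exact congrArg (eVariationOn · _) hf.funext

theorem Function.Periodic.boundedVariationOn_Icc_sub_add {f : ℝ → ℝ} {c a : ℝ}
    (hf : Periodic f c) (hc : 0 ≤ c) (h : BoundedVariationOn f (Icc a (a + c))) :
    BoundedVariationOn f (Icc (a - c) (a + c)) := by
  have hsplit := eVariationOn.Icc_add_Icc f (s := univ) (sub_le_self a hc)
    (le_add_of_nonneg_right hc) (mem_univ a)
  have hshift := hf.eVariationOn_Icc_add (a - c) a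
  simp only [univ_inter, sub_add_cancel] at hsplit hshift
  rw [BoundedVariationOn, ← hsplit, ← hshift]
  exact ENNReal.add_ne_top.2 ⟨h, h⟩

theorem abs_sub_inv_mul_integral_le_eVariationOn {f : ℝ → ℝ} {s : Set ℝ} {a b x : ℝ}
    (hab : a < b) (hf : BoundedVariationOn f s) (hs : Icc a b ⊆ s) (hx : x ∈ s) :
    |f x - (b - a)⁻¹ * ∫ y in a..b, f y| ≤ (eVariationOn f s).toReal := by
  have hba : 0 < b - a := sub_pos.2 hab
  have hint : IntervalIntegrable f volume a b :=
    BoundedVariationOn.intervalIntegrable (hf.mono (by rwa [uIcc_of_le hab.le]))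
  have hosc : ∀ y ∈ uIoc a b, ‖f x - f y‖ ≤ (eVariationOn f s).toReal := fun y hy => by
    rw [uIoc_of_le hab.le] at hy
    rw [Real.norm_eq_abs, ← Real.dist_eq, dist_edist]
    exact ENNReal.toReal_mono hf (eVariationOn.edist_le f hx (hs (Ioc_subset_Icc_self hy)))
  have key := intervalIntegral.norm_integral_le_of_norm_le_const hosc
  rw [intervalIntegral.integral_sub intervalIntegrable_const hint, intervalIntegral.integral_const,
    smul_eq_mul, Real.norm_eq_abs, abs_of_pos hba] at key
  calc |f x - (b - a)⁻¹ * ∫ y in a..b, f y|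
      = (b - a)⁻¹ * |(b - a) * f x - ∫ y in a..b, f y| := by
        rw [← abs_of_pos (inv_pos.2 hba), ← abs_mul, abs_of_pos (inv_pos.2 hba)]
        congr 1; field_simp
    _ ≤ (b - a)⁻¹ * ((eVariationOn f s).toReal * (b - a)) := by gcongr
    _ = (eVariationOn f s).toReal := by field_simp

theorem variationOnFromTo.sum_range {α E : Type*} [LinearOrder α] [PseudoEMetricSpace E]
    {f : α → E} {s : Set α} (hf : LocallyBoundedVariationOn f s) {c : ℕ → α} {n : ℕ}
    (hc : ∀ i ≤ n, c i ∈ s) :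
    ∑ i ∈ Finset.range n, variationOnFromTo f s (c i) (c (i + 1)) =
      variationOnFromTo f s (c 0) (c n) := by
  induction n with
  | zero => simp [variationOnFromTo.self]
  | succ n ih =>
    rw [Finset.sum_range_succ, ih fun i hi => hc i (by omega),
      variationOnFromTo.add hf (hc 0 (by omega)) (hc n (by omega)) (hc (n + 1) le_rfl)]

theorem sum_variationOnFromTo_sub_one_div_add_one_div_le {f : ℝ → ℝ}
    (hf : BoundedVariationOn f (Icc (-1) 1)) {q : ℕ} (hq : 0 < q) :
    ∑ j ∈ Finset.range q, variationOnFromTo f (Icc (-1) 1) ((j - 1) / q) ((j + 1) / q) ≤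
      2 * (eVariationOn f (Icc (-1) 1)).toReal := by
  set s : Set ℝ := Icc (-1) 1
  set c : ℕ → ℝ := fun i => (i - 1) / q
  have hq' : (1 : ℝ) ≤ q := Nat.one_le_cast.2 hq
  have hc : ∀ i ≤ q + 1, c i ∈ s := fun i hi => by
    have : (i : ℝ) ≤ q + 1 := by exact_mod_cast hi
    constructor
    · rw [le_div_iff₀ (by positivity)]; linarith [(Nat.cast_nonneg i : (0 : ℝ) ≤ i)]
    · rw [div_le_iff₀ (by positivity)]; linarith
  have hsplit : ∀ j < q, variationOnFromTo f s ((j - 1) / q) ((j + 1) / q) =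
      variationOnFromTo f s (c j) (c (j + 1)) + variationOnFromTo f s (c (j + 1)) (c (j + 2)) :=
    fun j hj => by
      rw [variationOnFromTo.add hf.locallyBoundedVariationOn (hc j (by omega))
        (hc (j + 1) (by omega)) (hc (j + 2) (by omega))]
      simp only [c]; push_cast; ring_nf
  rw [Finset.sum_congr rfl fun j hj => hsplit j (Finset.mem_range.1 hj), Finset.sum_add_distrib,
    variationOnFromTo.sum_range hf.locallyBoundedVariationOn fun i hi => hc i (by omega),
    variationOnFromTo.sum_range (c := fun i => c (i + 1)) hf.locallyBoundedVariationOn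
      fun i hi => hc (i + 1) (by omega)]
  linarith [(abs_le.1 (variationOnFromTo.abs_le_eVariationOn hf (a := c 0) (b := c q))).2,
    (abs_le.1 (variationOnFromTo.abs_le_eVariationOn hf (a := c 1) (b := c (q + 1)))).2]

theorem Finset.sum_range_comp_toNat_mul_emod {M : Type*} [AddCommMonoid M] {p : ℤ} {q : ℕ}
    (hpq : IsCoprime p q) (g : ℕ → M) :
    ∑ k ∈ range q, g ((k * p) % q).toNat = ∑ k ∈ range q, g k := by
  rcases Nat.eq_zero_or_pos q with rfl | hq
  · simp
  set σ : ℕ → ℕ := fun k => ((k * p) % q).toNat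
  have hσ : ∀ k, (σ k : ℤ) = k * p % q := fun k =>
    Int.toNat_of_nonneg (Int.emod_nonneg _ (by omega))
  have hmaps : MapsTo σ (range q) (range q) := fun k _ => by
    have h₁ := Int.emod_lt_of_pos (k * p) (Int.natCast_pos.2 hq)
    have h₂ := hσ k
    simp only [coe_range, Set.mem_Iio]; omega
  have hinj : InjOn σ (range q) := fun k hk k' hk' h => by
    simp only [coe_range, Set.mem_Iio] at hk hk'
    have hmod : (k : ℤ) * p ≡ k' * p [ZMOD q] := by
      rw [Int.ModEq, ← hσ, ← hσ, h]
    have hdvd : (q : ℤ) ∣ (k' - k) * p := by rw [sub_mul]; exact hmod.dvd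
    have := Int.eq_zero_of_abs_lt_dvd (hpq.symm.dvd_of_dvd_mul_right hdvd)
      (by rw [abs_lt]; omega)
    omega
  have hbij := ((finite_toSet _).injOn_iff_bijOn_of_mapsTo hmaps).1 hinj
  exact sum_nbij σ hmaps hinj hbij.surjOn fun _ _ => rfl

theorem Rat.exists_natCast_mul_sub_mem_Icc {θ : ℝ} {r : ℚ}
    (hr : |θ - r| ≤ 1 / (r.den : ℝ) ^ 2) {k : ℕ} (hk : k ≤ r.den) :
    ∃ m : ℤ, k * θ - m ∈ Icc ((((k * r.num) % r.den).toNat - 1) / r.den : ℝ)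
      ((((k * r.num) % r.den).toNat + 1) / r.den) := by
  set σ : ℕ := ((k * r.num) % r.den).toNat
  set m : ℤ := k * r.num / r.den
  have hq : (0 : ℝ) < r.den := by exact_mod_cast r.pos
  have hσ : (σ : ℝ) = k * r.num - r.den * m := by
    rw [← Int.cast_natCast,
      Int.toNat_of_nonneg (Int.emod_nonneg _ (by exact_mod_cast r.den_nz)), Int.emod_def]
    push_cast; ring
  have hdrift : |k * (θ - r)| ≤ 1 / r.den := by
    rw [abs_mul, Nat.abs_cast]
    calc (k : ℝ) * |θ - r| ≤ r.den * (1 / (r.den : ℝ) ^ 2) := by gcongr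
      _ = 1 / r.den := by field_simp
  have hsplit : k * θ - m = σ / r.den + k * (θ - r) := by
    rw [hσ, Rat.cast_def]; field_simp; ring
  refine ⟨m, ?_⟩
  rw [hsplit, sub_div, add_div]
  constructor <;> linarith [abs_le.1 hdrift]

theorem abs_sub_natCast_mul_integral_le {f : ℝ → ℝ} (hf : BoundedVariationOn f (Icc (-1) 1))
    {q j : ℕ} (hj : j < q) {x : ℝ} (hx : x ∈ Icc ((j - 1) / q : ℝ) ((j + 1) / q)) :
    |f x - q * ∫ y in (j / q : ℝ)..(j + 1) / q, f y| ≤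
      variationOnFromTo f (Icc (-1) 1) ((j - 1) / q) ((j + 1) / q) := by
  have hq : (0 : ℝ) < q := by exact_mod_cast j.zero_le.trans_lt hj
  have hjq : (j : ℝ) + 1 ≤ q := by exact_mod_cast hj
  have hsub : Icc ((j - 1) / q : ℝ) ((j + 1) / q) ⊆ Icc (-1) 1 :=
    Icc_subset_Icc (by rw [le_div_iff₀ hq]; linarith [(Nat.cast_nonneg j : (0 : ℝ) ≤ j)])
      (by rw [div_le_iff₀ hq]; linarith)
  rw [variationOnFromTo.eq_of_le _ _ (by gcongr; linarith), inter_eq_right.2 hsub]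
  have h := abs_sub_inv_mul_integral_le_eVariationOn (div_lt_div_of_pos_right (lt_add_one _) hq)
    (hf.mono hsub) (Icc_subset_Icc (by gcongr; linarith) le_rfl) hx
  rwa [← sub_div, add_sub_cancel_left, one_div, inv_inv] at h

def rotationSum (f : ℝ → ℝ) (θ : ℝ) (Q : ℕ) : ℝ := ∑ k ∈ Finset.range Q, f (k * θ)

theorem abs_rotationSum_den_sub_le {f : ℝ → ℝ} (hf : BoundedVariationOn f (Icc (-1) 1))
    (hper : Periodic f 1) {θ : ℝ} {r : ℚ} (hr : |θ - r| ≤ 1 / (r.den : ℝ) ^ 2) :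
    |rotationSum f θ r.den - r.den * ∫ x in (0 : ℝ)..1, f x| ≤
      2 * (eVariationOn f (Icc (-1) 1)).toReal := by
  set q := r.den
  set σ : ℕ → ℕ := fun k => ((k * r.num) % q).toNat
  set G : ℕ → ℝ := fun j => ∫ x in (j / q : ℝ)..(j + 1) / q, f x
  set V : ℕ → ℝ := fun j => variationOnFromTo f (Icc (-1) 1) ((j - 1) / q) ((j + 1) / q)
  have hq : (0 : ℝ) < q := by exact_mod_cast r.pos
  have hperm (g : ℕ → ℝ) :
      ∑ k ∈ Finset.range q, g (σ k) = ∑ k ∈ Finset.range q, g k :=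
    Finset.sum_range_comp_toNat_mul_emod r.isCoprime_num_den g
  have hG : ∑ j ∈ Finset.range q, G j = ∫ x in (0 : ℝ)..1, f x := by
    have hint : IntervalIntegrable f volume 0 1 := BoundedVariationOn.intervalIntegrable
      (hf.mono (by rw [uIcc_of_le zero_le_one]; exact Icc_subset_Icc (by norm_num) le_rfl))
    have hmem : ∀ j ≤ q, (j / q : ℝ) ∈ uIcc 0 1 := fun j hj => by
      rw [uIcc_of_le zero_le_one]
      exact ⟨by positivity, (div_le_one hq).2 (by exact_mod_cast hj)⟩
    have h := intervalIntegral.sum_integral_adjacent_intervals (a := fun j : ℕ => (j / q : ℝ))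
      (n := q) fun j hj => hint.mono_set (uIcc_subset_uIcc (hmem j hj.le) (hmem (j + 1) hj))
    simpa [G, div_self hq.ne'] using h
  have hterm : ∀ k < q, |f (k * θ) - q * G (σ k)| ≤ V (σ k) := fun k hk => by
    obtain ⟨m, hm⟩ := r.exists_natCast_mul_sub_mem_Icc hr hk.le
    have hσ : σ k < q := by
      have := Int.emod_lt_of_pos (k * r.num) (Int.natCast_pos.2 r.pos : (0 : ℤ) < q)
      simp only [σ]; omega
    rw [← hper.sub_int_mul_eq m, mul_one]
    exact abs_sub_natCast_mul_integral_le hf hσ hm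
  calc |rotationSum f θ q - q * ∫ x in (0 : ℝ)..1, f x|
      = |∑ k ∈ Finset.range q, (f (k * θ) - q * G (σ k))| := by
        rw [Finset.sum_sub_distrib, ← Finset.mul_sum, hperm G, hG, rotationSum]
    _ ≤ ∑ k ∈ Finset.range q, V (σ k) := (Finset.abs_sum_le_sum_abs _ _).trans
        (Finset.sum_le_sum fun k hk => hterm k (Finset.mem_range.1 hk))
    _ = ∑ j ∈ Finset.range q, V j := hperm V
    _ ≤ 2 * (eVariationOn f (Icc (-1) 1)).toReal :=
        sum_variationOnFromTo_sub_one_div_add_one_div_le hf r.pos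

theorem Irrational.tendsto_den_of_tendsto {ι : Type*} {x : ℝ} (hx : Irrational x)
    {l : Filter ι} {r : ι → ℚ} (hr : Tendsto (fun i => (r i : ℝ)) l (𝓝 x)) :
    Tendsto (fun i => (r i).den) l atTop := by
  refine tendsto_atTop.2 fun N => ?_
  obtain ⟨ε, hε, hN⟩ := (hx.eventually_forall_le_dist_cast_rat_of_den_le N).exists_gt
  filter_upwards [hr.eventually (Metric.ball_mem_nhds x hε)] with i hi
  by_contra! hlt
  exact (hN (r i) hlt.le).not_gt (by rwa [dist_comm])

theorem Irrational.exists_seq_rat_abs_sub_lt_one_div_den_sq {x : ℝ} (hx : Irrational x) :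
    ∃ r : ℕ → ℚ, Tendsto (fun n => (r n).den) atTop atTop ∧
      ∀ n, |x - r n| < 1 / ((r n).den : ℝ) ^ 2 := by
  have h (n : ℕ) : ∃ r : ℚ, |x - r| < 1 / (r.den : ℝ) ^ 2 ∧ |x - r| < 1 / (n + 1) := by
    obtain ⟨r₀, hlo, hhi⟩ := exists_rat_btwn (sub_lt_self x (Nat.one_div_pos_of_nat (n := n)))
    obtain ⟨r, hr, hlt⟩ := Real.exists_rat_abs_sub_lt_and_lt_of_irrational hx r₀
    exact ⟨r, hr, hlt.trans (by rw [abs_of_pos (sub_pos.2 hhi)]; linarith)⟩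
  choose r hr hr' using h
  refine ⟨r, hx.tendsto_den_of_tendsto ?_, hr⟩
  rw [tendsto_iff_dist_tendsto_zero]
  exact squeeze_zero (fun _ => dist_nonneg)
    (fun n => by rw [dist_comm, Real.dist_eq]; exact (hr' n).le)
    tendsto_one_div_add_atTop_nhds_zero_nat

theorem tendsto_den_mul_sub_num {x : ℝ} {r : ℕ → ℚ}
    (hden : Tendsto (fun n => (r n).den) atTop atTop)
    (hr : ∀ n, |x - r n| < 1 / ((r n).den : ℝ) ^ 2) :
    Tendsto (fun n => ((r n).den : ℝ) * x - (r n).num) atTop (𝓝 0) := by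
  refine squeeze_zero_norm (fun n => ?_) (tendsto_one_div_atTop_nhds_zero_nat.comp hden)
  have hq : (0 : ℝ) < (r n).den := by exact_mod_cast (r n).pos
  calc ‖((r n).den : ℝ) * x - (r n).num‖ = (r n).den * |x - r n| := by
        rw [Real.norm_eq_abs, Rat.cast_def, ← abs_of_pos hq, ← abs_mul, abs_of_pos hq]
        congr 1; field_simp
    _ ≤ (r n).den * (1 / ((r n).den : ℝ) ^ 2) := by gcongr; exact (hr n).le
    _ = 1 / (r n).den := by field_simp

theorem Filter.liminf_eq_zero_of_frequently_lt {ι : Type*} {l : Filter ι} {u : ι → ℝ}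
    (h0 : ∀ i, 0 ≤ u i) (h : ∀ ε > 0, ∃ᶠ i in l, u i < ε) : liminf u l = 0 := by
  have hbdd : IsBoundedUnder (· ≥ ·) l u := isBoundedUnder_of ⟨0, h0⟩
  refine le_antisymm (le_of_forall_pos_le_add fun ε hε => ?_) ?_
  · rw [zero_add]; exact liminf_le_of_frequently_le ((h ε hε).mono fun i hi => hi.le) hbdd
  · exact le_liminf_of_le
      (IsCoboundedUnder.of_frequently_le ((h 1 one_pos).mono fun i hi => hi.le))
      (Eventually.of_forall h0)

theorem Function.Periodic.tendsto_comp_add {ι : Type*} {f : ℝ → ℝ} {c : ℝ}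
    (hf : Periodic f c) (hcont : Continuous f) {l : Filter ι} {t : ι → ℝ} {p : ι → ℤ}
    (ht : Tendsto (fun i => t i - p i * c) l (𝓝 0)) (x : ℝ) :
    Tendsto (fun i => f (t i + x)) l (𝓝 (f x)) := by
  have h := (hcont.tendsto (0 + x)).comp (ht.add_const x)
  rw [zero_add] at h
  refine h.congr fun i => ?_
  rw [comp_apply, sub_add_eq_add_sub, hf.sub_int_mul_eq]

theorem rotationSum_sub_rotationSum_sub (f : ℝ → ℝ) (θ : ℝ) {Q m : ℕ} (h : m ≤ Q) :
    rotationSum f θ Q - rotationSum f θ (Q - m) =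
      ∑ i ∈ Finset.range m, f (Q * θ + -((i + 1) * θ)) := by
  obtain ⟨N, rfl⟩ := Nat.exists_eq_add_of_le' h
  rw [Nat.add_sub_cancel, rotationSum, rotationSum, Finset.sum_range_add, add_sub_cancel_left,
    ← Finset.sum_range_reflect]
  refine Finset.sum_congr rfl fun i hi => ?_
  have him : 1 + i ≤ m := by rw [add_comm]; exact Finset.mem_range.1 hi
  rw [Nat.sub_sub, Nat.cast_add, Nat.cast_sub him]
  push_cast; ring_nf

theorem tendsto_rotationSum_sub {f : ℝ → ℝ} (hcont : Continuous f) (hper : Periodic f 1)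
    (heven : f.Even) {θ : ℝ} {q : ℕ → ℕ} {p : ℕ → ℤ} (hq : Tendsto q atTop atTop)
    (hqp : Tendsto (fun n => q n * θ - p n) atTop (𝓝 0)) {L : ℝ}
    (hL : Tendsto (fun n => rotationSum f θ (q n)) atTop (𝓝 L)) (m : ℕ) :
    Tendsto (fun n => rotationSum f θ (q n - m)) atTop
      (𝓝 (L - (rotationSum f θ (m + 1) - f 0))) := by
  have hqp' : Tendsto (fun n => q n * θ - p n * 1) atTop (𝓝 0) := by simpa using hqp
  have hhead : rotationSum f θ (m + 1) - f 0 = ∑ i ∈ Finset.range m, f (-((i + 1) * θ)) := by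
    rw [rotationSum, Finset.sum_range_succ', Nat.cast_zero, zero_mul, add_sub_cancel_right]
    exact Finset.sum_congr rfl fun i _ => by rw [heven]; push_cast; rfl
  have htail : Tendsto (fun n => ∑ i ∈ Finset.range m, f (q n * θ + -((i + 1) * θ))) atTop
      (𝓝 (rotationSum f θ (m + 1) - f 0)) := by
    rw [hhead]
    exact tendsto_finsetSum _ fun i _ => hper.tendsto_comp_add hcont hqp' _
  refine (hL.sub htail).congr' ?_
  filter_upwards [hq.eventually_ge_atTop m] with n hn
  rw [← rotationSum_sub_rotationSum_sub f θ hn, sub_sub_cancel]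

theorem frequently_abs_rotationSum_lt {f : ℝ → ℝ} (hcont : Continuous f) (hper : Periodic f 1)
    (heven : f.Even) {θ : ℝ} {q : ℕ → ℕ} {p : ℕ → ℤ} (hq : Tendsto q atTop atTop)
    (hqp : Tendsto (fun n => q n * θ - p n) atTop (𝓝 0)) {L : ℝ}
    (hL : Tendsto (fun n => rotationSum f θ (q n)) atTop (𝓝 L)) {ε : ℝ} (hε : 0 < ε) :
    ∃ᶠ Q in atTop, |rotationSum f θ Q| < ε := by
  have hf0 : Tendsto (fun k => f (q k * θ + 0)) atTop (𝓝 (f 0)) :=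
    hper.tendsto_comp_add hcont (by simpa using hqp) 0
  have hzero : Tendsto (fun k => L - (rotationSum f θ (q k + 1) - f 0)) atTop (𝓝 0) := by
    have h := (tendsto_const_nhds (x := L)).sub ((hL.add hf0).sub (tendsto_const_nhds (x := f 0)))
    rw [add_sub_cancel_right, sub_self] at h
    refine h.congr fun k => ?_
    rw [add_zero, rotationSum, rotationSum, Finset.sum_range_succ]
  obtain ⟨k, hk⟩ := (((continuous_abs.tendsto 0).comp hzero).eventually
    (gt_mem_nhds (by rwa [abs_zero]))).exists
  have hlim := tendsto_rotationSum_sub hcont hper heven hq hqp hL (q k)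
  have hev : ∀ᶠ n in atTop, |rotationSum f θ (q n - q k)| < ε :=
    ((continuous_abs.tendsto _).comp hlim).eventually (gt_mem_nhds hk)
  exact ((tendsto_sub_atTop_nat (q k)).comp hq).frequently_map _ (fun _ h => h) hev.frequently

open Filter in
/-- Proposition 2: for even continuous 1-periodic `f` of bounded variation
with zero mean, the liminf of `|∑_{k<Q} f(kθ)|` is zero for every irrational `θ`. -/
theorem stmt13 (f : ℝ → ℝ) (hcont : Continuous f) (hper : ∀ x : ℝ, f (x + 1) = f x)
    (heven : ∀ x : ℝ, f x = f (-x))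
    (hBV : BoundedVariationOn f (Set.Icc 0 1)) (hmean : (∫ x in (0 : ℝ)..1, f x) = 0)
    (θ : ℝ) (hθ : Irrational θ) :
    Filter.liminf (fun Q : ℕ => |∑ k ∈ Finset.range Q, f (k * θ)|) atTop = 0 := by
  replace hper : Periodic f 1 := hper
  have hBV' : BoundedVariationOn f (Icc (-1) 1) := by
    simpa using hper.boundedVariationOn_Icc_sub_add zero_le_one (a := 0) (by simpa using hBV)
  obtain ⟨r, hden, hr⟩ := hθ.exists_seq_rat_abs_sub_lt_one_div_den_sq
  set B := 2 * (eVariationOn f (Icc (-1) 1)).toReal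
  have hbdd : ∀ n, rotationSum f θ (r n).den ∈ Icc (-B) B := fun n => abs_le.1 <| by
    simpa [hmean] using abs_rotationSum_den_sub_le hBV' hper (hr n).le
  obtain ⟨L, -, φ, hφ, hL⟩ := tendsto_subseq_of_bounded (Metric.isBounded_Icc (-B) B) hbdd
  refine liminf_eq_zero_of_frequently_lt (fun _ => abs_nonneg _) fun ε hε => ?_
  exact frequently_abs_rotationSum_lt hcont hper (fun x => (heven x).symm)
    (hden.comp hφ.tendsto_atTop) ((tendsto_den_mul_sub_num hden hr).comp hφ.tendsto_atTop) hL hε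
end

section
/- Let g : [α, β] → ℝ be monotone decreasing with g(α) = A, g(β) = B, and suppose that for G = (1/3)A + (2/3)B, the sets Ω_+ = {x ∈ [α,β] : g(x) > G} and Ω_− = {x ∈ [α,β] : g(x) < G} each have Lebesgue measure less than 2δ for some δ > 0. Then (G − 2(G − B)·δ/(β−α))·(β−α) ≤ ∫_α^β g(x)dx ≤ (G + 2(A − G)·δ/(β−α))·(β−α), i.e., |∫_α^β g − G(β−α)| ≤ (4/3)(A − B)·δ. -/
open scoped BigOperators

/-!
Bound `g` by `A` on `Ω₊` and by `G` off it: the integral exceeds `G (β - α)` by at most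
`(A - G) |Ω₊| ≤ 2 (A - G) δ`. Symmetrically, bounding `g` below by `B` on `Ω₋` and by `G`
off it, the deficit is at most `2 (G - B) δ`. With `G = A/3 + 2B/3` both are at most
`4/3 (A - B) δ`.
-/

open MeasureTheory Set

section LevelSetBounds

variable {X : Type*} [MeasurableSpace X] {μ : Measure X} {S : Set X} {f : X → ℝ} {c m M : ℝ}

theorem setIntegral_ge_sub_measureReal_setOf_lt (hS : MeasurableSet S) (hμS : μ S ≠ ⊤)
    (hf : IntegrableOn f S μ) (hfm : ∀ x ∈ S, m ≤ f x)
    (hT : MeasurableSet {x ∈ S | f x < c}) :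
    c * μ.real S - (c - m) * μ.real {x ∈ S | f x < c} ≤ ∫ x in S, f x ∂μ := by
  set T := {x ∈ S | f x < c}
  have hTS : T ⊆ S := sep_subset S _
  have hsplit := integral_inter_add_sdiff hT hf
  rw [inter_eq_right.2 hTS] at hsplit
  have hon : m * μ.real T ≤ ∫ x in T, f x ∂μ :=
    setIntegral_ge_of_const_le_real hT (measure_ne_top_of_subset hTS hμS)
      (fun x hx => hfm x hx.1) (hf.mono_set hTS)
  have hoff : c * μ.real (S \ T) ≤ ∫ x in S \ T, f x ∂μ :=
    setIntegral_ge_of_const_le_real (hS.diff hT) (measure_ne_top_of_subset sdiff_subset hμS)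
      (fun x hx => not_lt.1 fun h => hx.2 ⟨hx.1, h⟩) (hf.mono_set sdiff_subset)
  rw [measureReal_sdiff hTS hT hμS] at hoff
  linarith

theorem setIntegral_le_add_measureReal_setOf_lt (hS : MeasurableSet S) (hμS : μ S ≠ ⊤)
    (hf : IntegrableOn f S μ) (hfM : ∀ x ∈ S, f x ≤ M)
    (hT : MeasurableSet {x ∈ S | c < f x}) :
    ∫ x in S, f x ∂μ ≤ c * μ.real S + (M - c) * μ.real {x ∈ S | c < f x} := by
  have hneg : {x ∈ S | -f x < -c} = {x ∈ S | c < f x} := by simp only [neg_lt_neg_iff]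
  have := setIntegral_ge_sub_measureReal_setOf_lt (f := fun x => -f x) (c := -c) (m := -M)
    hS hμS hf.neg (fun x hx => neg_le_neg (hfM x hx)) (hneg ▸ hT)
  rw [hneg, integral_neg] at this
  linarith

end LevelSetBounds

theorem AntitoneOn.ordConnected_sep {α β : Type*} [Preorder α] [Preorder β] {f : α → β}
    {S : Set α} {I : Set β} (hS : S.OrdConnected) (hf : AntitoneOn f S) (hI : I.OrdConnected) :
    {x ∈ S | f x ∈ I}.OrdConnected := by
  refine ⟨fun x hx y hy z hz => ?_⟩
  have hzS : z ∈ S := hS.out hx.1 hy.1 hz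
  exact ⟨hzS, hI.out hy.2 hx.2 ⟨hf hzS hy.1 hz.2, hf hx.1 hzS hz.1⟩⟩

section Antitone

variable {g : ℝ → ℝ} {α β : ℝ}

theorem AntitoneOn.measurableSet_sep_Icc (hg : AntitoneOn g (Icc α β)) {I : Set ℝ}
    (hI : I.OrdConnected) : MeasurableSet {x ∈ Icc α β | g x ∈ I} :=
  (hg.ordConnected_sep ordConnected_Icc hI).measurableSet

theorem AntitoneOn.intervalIntegral_le (hαβ : α ≤ β) (hg : AntitoneOn g (Icc α β))
    (G : ℝ) :
    ∫ x in α..β, g x ≤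
      G * (β - α) + (g α - G) * volume.real {x ∈ Icc α β | G < g x} := by
  rw [intervalIntegral.integral_of_le hαβ, ← integral_Icc_eq_integral_Ioc,
    ← Real.volume_real_Icc_of_le hαβ]
  exact setIntegral_le_add_measureReal_setOf_lt measurableSet_Icc measure_Icc_lt_top.ne
    (hg.integrableOn_isCompact isCompact_Icc)
    (fun x hx => hg (left_mem_Icc.2 hαβ) hx hx.1)
    (hg.measurableSet_sep_Icc ordConnected_Ioi)

theorem AntitoneOn.le_intervalIntegral (hαβ : α ≤ β) (hg : AntitoneOn g (Icc α β))
    (G : ℝ) :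
    G * (β - α) - (G - g β) * volume.real {x ∈ Icc α β | g x < G} ≤
      ∫ x in α..β, g x := by
  rw [intervalIntegral.integral_of_le hαβ, ← integral_Icc_eq_integral_Ioc,
    ← Real.volume_real_Icc_of_le hαβ]
  exact setIntegral_ge_sub_measureReal_setOf_lt measurableSet_Icc measure_Icc_lt_top.ne
    (hg.integrableOn_isCompact isCompact_Icc)
    (fun x hx => hg hx (right_mem_Icc.2 hαβ) hx.2)
    (hg.measurableSet_sep_Icc ordConnected_Iio)

end Antitone

open MeasureTheory in
/-- integral estimate over a jump segment for a decreasing function. -/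
theorem stmt16 (g : ℝ → ℝ) (α β : ℝ) (hαβ : α < β)
    (hmono : AntitoneOn g (Set.Icc α β)) (A B G δ : ℝ)
    (hA : g α = A) (hB : g β = B) (hG : G = 1 / 3 * A + 2 / 3 * B) (hδ : 0 < δ)
    (hplus : volume {x ∈ Set.Icc α β | G < g x} < ENNReal.ofReal (2 * δ))
    (hminus : volume {x ∈ Set.Icc α β | g x < G} < ENNReal.ofReal (2 * δ)) :
    (G - 2 * (G - B) * δ / (β - α)) * (β - α) ≤ (∫ x in α..β, g x) ∧
    (∫ x in α..β, g x) ≤ (G + 2 * (A - G) * δ / (β - α)) * (β - α) ∧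
    |(∫ x in α..β, g x) - G * (β - α)| ≤ 4 / 3 * (A - B) * δ := by
  have hBA : B ≤ A :=
    hA ▸ hB ▸ hmono (left_mem_Icc.2 hαβ.le) (right_mem_Icc.2 hαβ.le) hαβ.le
  have hplus' := ENNReal.toReal_le_of_le_ofReal (by positivity) hplus.le
  have hminus' := ENNReal.toReal_le_of_le_ofReal (by positivity) hminus.le
  have hup : ∫ x in α..β, g x ≤ G * (β - α) + (A - G) * (2 * δ) :=
    (hA ▸ hmono.intervalIntegral_le hαβ.le G).trans (by gcongr; exacts [by linarith, hplus'])
  have hlow : G * (β - α) - (G - B) * (2 * δ) ≤ ∫ x in α..β, g x :=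
    le_trans (by gcongr; exacts [by linarith, hminus'])
      (hB ▸ hmono.le_intervalIntegral hαβ.le G)
  have hne : β - α ≠ 0 := sub_ne_zero.2 hαβ.ne'
  have hAG : (A - G) * (2 * δ) = 4 / 3 * (A - B) * δ := by rw [hG]; ring
  have hGB : (G - B) * (2 * δ) = 2 / 3 * (A - B) * δ := by rw [hG]; ring
  have hABδ : 0 ≤ (A - B) * δ := mul_nonneg (sub_nonneg.2 hBA) hδ.le
  refine ⟨?_, ?_, abs_le.2 ⟨?_, ?_⟩⟩
  · rw [sub_mul, div_mul_cancel₀ _ hne]; linarith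
  · rw [add_mul, div_mul_cancel₀ _ hne]; linarith
  · linarith
  · linarith
end

section
/- Let θ be irrational with convergent denominators Q_ν and let f be continuous 1-periodic with modulus of continuity ω. Then for any Q ∈ ℕ, ν, μ with Q = Q_ν − Q_μ ≥ 0, one has |∑_{k=0}^{Q_μ − 1} f(kθ + (Q_ν − Q_μ)θ) − ∑_{k=0}^{Q_μ − 1} f(kθ)| ≤ Q_μ·(ω(‖Q_ν θ‖) + ω(‖Q_μ θ‖)). -/
open scoped BigOperators

/-- The modulus of continuity of `f`. -/
noncomputable def modCont (f : ℝ → ℝ) (δ : ℝ) : ℝ :=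
  sSup {d : ℝ | ∃ x y : ℝ, |x - y| < δ ∧ d = |f x - f y|}

/-!
Each summand changes by at most `ω(‖Q_ν θ‖) + ω(‖Q_μ θ‖)`: going from `x` to `x - Q_μ θ` moves the
argument by `‖Q_μ θ‖` modulo `1`, and from there to `x + (Q_ν - Q_μ) θ` by `‖Q_ν θ‖` modulo `1`.
Since the distances are attained exactly while `ω` is defined with a strict inequality, the bound
`|f x - f y| ≤ ω(δ)` for `|x - y| ≤ δ` needs a limiting argument, which works because a continuous
periodic function is bounded.
-/

open Set Bornology

-- With `1 / 0 = 0` no complete quotient after the first is negative, whatever `θ` is.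
lemma pq_succ_nonneg (θ : ℝ) (n : ℕ) : 0 ≤ pq θ (n + 1) :=
  Int.floor_nonneg.2 (one_div_nonneg.2 (Int.fract_nonneg _))

lemma qden_nonneg (θ : ℝ) : ∀ n, 0 ≤ qden θ n
  | 0 => zero_le_one
  | 1 => pq_succ_nonneg θ 0
  | n + 2 => by
    have := pq_succ_nonneg θ (n + 1)
    have := qden_nonneg θ (n + 1)
    have := qden_nonneg θ n
    rw [qden]
    positivity

section modCont

variable {f : ℝ → ℝ} {δ x y : ℝ}

lemma modCont_nonneg : 0 ≤ modCont f δ :=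
  Real.sSup_nonneg (by rintro _ ⟨x, y, -, rfl⟩; exact abs_nonneg _)

lemma abs_sub_le_modCont_of_lt (hb : IsBounded (range f)) (h : |x - y| < δ) :
    |f x - f y| ≤ modCont f δ := by
  obtain ⟨C, hC⟩ := Metric.isBounded_iff.1 hb
  refine le_csSup ⟨C, ?_⟩ ⟨x, y, h, rfl⟩
  rintro _ ⟨a, b, -, rfl⟩
  simpa [Real.dist_eq] using hC (mem_range_self a) (mem_range_self b)

lemma abs_sub_le_modCont_of_le (hf : Continuous f) (hb : IsBounded (range f))
    (h : |x - y| ≤ δ) : |f x - f y| ≤ modCont f δ := by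
  rcases eq_or_ne x y with rfl | hxy
  · simpa using modCont_nonneg
  -- Approach `x` along the segment from `y`, where the distance to `y` is strictly below `δ`.
  have hpos : 0 < |x - y| := abs_pos.2 (sub_ne_zero.2 hxy)
  have hclosed : IsClosed {t : ℝ | |f (y + t * (x - y)) - f y| ≤ modCont f δ} :=
    isClosed_le (by fun_prop) continuous_const
  have hsegment : Ico (0 : ℝ) 1 ⊆ {t : ℝ | |f (y + t * (x - y)) - f y| ≤ modCont f δ} := by
    intro t ⟨ht0, ht1⟩
    apply abs_sub_le_modCont_of_lt hb
    rw [add_sub_cancel_left, abs_mul, abs_of_nonneg ht0]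
    calc t * |x - y| < 1 * |x - y| := mul_lt_mul_of_pos_right ht1 hpos
      _ ≤ δ := by rwa [one_mul]
  have hone : (1 : ℝ) ∈ closure (Ico 0 1) := by
    rw [closure_Ico zero_ne_one]
    exact ⟨zero_le_one, le_rfl⟩
  simpa using hclosed.closure_subset_iff.2 hsegment hone

lemma abs_add_sub_le_modCont_nint (hf : Continuous f) (hper : Function.Periodic f 1) (x a : ℝ) :
    |f (x + a) - f x| ≤ modCont f (nint a) := by
  have hb : IsBounded (range f) := hper.isBounded_of_continuous one_ne_zero hf
  rw [← hper.sub_int_mul_eq (round a), mul_one]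
  apply abs_sub_le_modCont_of_le hf hb
  rw [nint, add_sub_assoc, add_sub_cancel_left]

lemma abs_add_sub_sub_le_modCont_nint (hf : Continuous f) (hper : Function.Periodic f 1)
    (x a b : ℝ) :
    |f (x + (a - b)) - f x| ≤ modCont f (nint a) + modCont f (nint b) := by
  have ha := abs_add_sub_le_modCont_nint hf hper (x - b) a
  have hb := abs_add_sub_le_modCont_nint hf hper (x - b) b
  rw [sub_add_cancel, abs_sub_comm] at hb
  rw [sub_add_comm, add_comm] at ha
  calc |f (x + (a - b)) - f x|
      ≤ |f (x + (a - b)) - f (x - b)| + |f (x - b) - f x| := abs_sub_le _ _ _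
    _ ≤ _ := add_le_add ha hb

end modCont

lemma abs_sum_sub_sum_le {ι : Type*} (s : Finset ι) (g h : ι → ℝ) {C : ℝ}
    (hC : ∀ i ∈ s, |g i - h i| ≤ C) : |∑ i ∈ s, g i - ∑ i ∈ s, h i| ≤ s.card * C := by
  rw [← Finset.sum_sub_distrib]
  calc |∑ i ∈ s, (g i - h i)| ≤ ∑ i ∈ s, |g i - h i| := Finset.abs_sum_le_sum_abs _ _
    _ ≤ s.card • C := Finset.sum_le_card_nsmul _ _ _ hC
    _ = s.card * C := nsmul_eq_mul _ _

theorem stmt17_general (θ : ℝ) (f : ℝ → ℝ)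
    (hcont : Continuous f) (hper : ∀ x : ℝ, f (x + 1) = f x)
    (ν μ : ℕ) :
    |∑ k ∈ Finset.range (qden θ μ).toNat,
        f (k * θ + ((qden θ ν : ℝ) - (qden θ μ : ℝ)) * θ) -
      ∑ k ∈ Finset.range (qden θ μ).toNat, f (k * θ)| ≤
    (qden θ μ : ℝ) *
      (modCont f (nint ((qden θ ν : ℝ) * θ)) + modCont f (nint ((qden θ μ : ℝ) * θ))) := by
  have hcard : ((Finset.range (qden θ μ).toNat).card : ℝ) = qden θ μ := by
    rw [Finset.card_range]
    exact_mod_cast Int.toNat_of_nonneg (qden_nonneg θ μ)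
  rw [← hcard]
  refine abs_sum_sub_sum_le _ _ _ fun k _ => ?_
  rw [sub_mul]
  exact abs_add_sub_sub_le_modCont_nint hcont hper _ _ _

/-- shifting a Birkhoff sum by `(Q_ν − Q_μ)θ` changes it by at most
`Q_μ (ω(‖Q_ν θ‖) + ω(‖Q_μ θ‖))`. -/
theorem stmt17 (θ : ℝ) (hθ : Irrational θ) (f : ℝ → ℝ)
    (hcont : Continuous f) (hper : ∀ x : ℝ, f (x + 1) = f x)
    (ν μ : ℕ) (hQ : qden θ μ ≤ qden θ ν) :
    |∑ k ∈ Finset.range (qden θ μ).toNat,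
        f (k * θ + ((qden θ ν : ℝ) - (qden θ μ : ℝ)) * θ) -
      ∑ k ∈ Finset.range (qden θ μ).toNat, f (k * θ)| ≤
    (qden θ μ : ℝ) *
      (modCont f (nint ((qden θ ν : ℝ) * θ)) + modCont f (nint ((qden θ μ : ℝ) * θ))) :=
  stmt17_general θ f hcont hper ν μ
end
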